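/- arXiv:1906.11658 — 3 statements merged into one kernel-verified Lean document; each statement's English description precedes it below -/
import Mathlib

section
/- Let w ∈ ℝ^p be a nonnegative weight vector and let x_1,...,x_n ∈ {0,1}^p be covariate vectors with instrument assignments z_1,...,z_n ∈ {0,1}. Fix a unit i with z_i = 1 and suppose θ* ∈ {0,1}^p maximizes θᵀw over all θ ∈ {0,1}^p subject to the constraint that there exists k with z_k = 0 and x_k ∘ θ = x_i ∘ θ (where ∘ is the coordinatewise product). Then for any unit k with z_k = 0 and x_k ∘ θ* = x_i ∘ θ*, the unit k minimizes the weighted Hamming distance wᵀ 1[x_i ≠ x_l] over all units l with z_l = 0, where 1[x_i ≠ x_l] denotes the binary vector whose j-th entry is 1 iff x_{ij} ≠ x_{lj}. -/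
/-!
For any control unit `l`, the set of coordinates on which `x l` agrees with `x i` is a feasible
`θ`, so its weight is at most that of `θ*`. The weighted Hamming distance to `x l` is the total
weight minus that agreement weight. For the matched unit `k` the agreement set contains `θ*`, so
with nonnegative weights its distance is at most the total weight minus the weight of `θ*`.
-/

open Finset

section MaskedSums

variable {ι : Type*} [Fintype ι]

theorem sum_ite_le_sum_ite_of_imp {M : Type*} [AddCommMonoid M] [PartialOrder M]
    [IsOrderedAddMonoid M] {P Q : ι → Prop} [DecidablePred P] [DecidablePred Q] {w : ι → M}
    (hw : ∀ j, 0 ≤ w j) (hPQ : ∀ j, P j → Q j) :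
    (∑ j, if P j then w j else 0) ≤ ∑ j, if Q j then w j else 0 := by
  refine sum_le_sum fun j _ => ?_
  by_cases hP : P j
  · simp [hP, hPQ j hP]
  · by_cases hQ : Q j <;> simp [hP, hQ, hw j]

theorem sum_ite_ne_eq_sub_sum_ite_eq {G α : Type*} [AddCommGroup G] [DecidableEq α]
    (a b : ι → α) (w : ι → G) :
    (∑ j, if a j ≠ b j then w j else 0) = ∑ j, w j - ∑ j, if a j = b j then w j else 0 := by
  rw [eq_sub_iff_add_eq, ← sum_add_distrib]
  refine sum_congr rfl fun j _ => ?_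
  by_cases h : a j = b j <;> simp [h]

end MaskedSums

theorem stmt0_general {n p : ℕ} (x : Fin n → Fin p → Bool) (z : Fin n → Bool)
    (w : Fin p → ℝ) (hw : ∀ j, 0 ≤ w j) (i : Fin n)
    (θs : Fin p → Bool)
    (hopt : ∀ θ : Fin p → Bool,
      (∃ k, z k = false ∧ ∀ j, θ j = true → x k j = x i j) →
      (∑ j, if θ j = true then w j else 0) ≤ ∑ j, if θs j = true then w j else 0)
    (k : Fin n)
    (hmatch : ∀ j, θs j = true → x k j = x i j) :
    ∀ l : Fin n, z l = false →
      (∑ j, if x i j ≠ x k j then w j else 0) ≤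
        ∑ j, if x i j ≠ x l j then w j else 0 := by
  intro l hl
  have agree_l_le : (∑ j, if x i j = x l j then w j else 0) ≤
      ∑ j, if θs j = true then w j else 0 := by
    simpa using hopt (fun j => decide (x i j = x l j))
      ⟨l, hl, fun j hj => (of_decide_eq_true hj).symm⟩
  have le_agree_k : (∑ j, if θs j = true then w j else 0) ≤
      ∑ j, if x i j = x k j then w j else 0 :=
    sum_ite_le_sum_ite_of_imp hw fun j hj => (hmatch j hj).symm
  rw [sum_ite_ne_eq_sub_sum_ite_eq, sum_ite_ne_eq_sub_sum_ite_eq]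
  exact sub_le_sub_left (agree_l_le.trans le_agree_k) _

/-- AME-IV optimality implies the matched unit minimizes the weighted
Hamming distance among units with opposite instrument. -/
theorem stmt0 {n p : ℕ} (x : Fin n → Fin p → Bool) (z : Fin n → Bool)
    (w : Fin p → ℝ) (hw : ∀ j, 0 ≤ w j) (i : Fin n) (hi : z i = true)
    (θs : Fin p → Bool)
    (hfeas : ∃ k, z k = false ∧ ∀ j, θs j = true → x k j = x i j)
    (hopt : ∀ θ : Fin p → Bool,
      (∃ k, z k = false ∧ ∀ j, θ j = true → x k j = x i j) →
      (∑ j, if θ j = true then w j else 0) ≤ ∑ j, if θs j = true then w j else 0)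
    (k : Fin n) (hk : z k = false)
    (hmatch : ∀ j, θs j = true → x k j = x i j) :
    ∀ l : Fin n, z l = false →
      (∑ j, if x i j ≠ x k j then w j else 0) ≤
        ∑ j, if x i j ≠ x l j then w j else 0 :=
  stmt0_general x z w hw i θs hopt k hmatch
end

section
/- Let units i = 1,...,n have potential treatments t_i(0), t_i(1) ∈ {0,1} satisfying monotonicity t_i(1) ≥ t_i(0), and potential outcomes y_i(0), y_i(1) ∈ ℝ. Suppose the exclusion restriction holds so that the observed outcome under instrument z is y_i(t_i(z)). Let n_c = #{i : t_i(1) > t_i(0)} and suppose n_c > 0. Then the local average treatment effect λ = (1/n_c) Σ_{i : t_i(1) > t_i(0)} (y_i(1) − y_i(0)) equals the ratio [Σ_{i=1}^n (y_i(t_i(1)) − y_i(t_i(0)))] / [Σ_{i=1}^n (t_i(1) − t_i(0))]. -/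
/-!
Under monotonicity a unit's instrument effect `y(t(1)) - y(t(0))` is `y(1) - y(0)` for a
complier and `0` for everyone else. Summing over units, the numerator is the total treatment
effect on compliers; applied to the treatment indicator itself, the denominator is their number.
-/

open Finset

section

variable {ι : Type*} [Fintype ι]

def compliers (t : ι → Bool → Bool) : Finset ι :=
  univ.filter fun i => t i true = true ∧ t i false = false

theorem sub_eq_ite_of_monotone {M : Type*} [AddGroup M] (y : Bool → M) {a b : Bool}
    (hab : b = true → a = true) :
    y a - y b = if a = true ∧ b = false then y true - y false else 0 := by
  cases a <;> cases b <;> simp_all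

theorem sum_instrument_effect_eq_sum_compliers {M : Type*} [AddCommGroup M]
    (t : ι → Bool → Bool) (hmono : ∀ i, t i false = true → t i true = true)
    (y : ι → Bool → M) :
    ∑ i, (y i (t i true) - y i (t i false)) = ∑ i ∈ compliers t, (y i true - y i false) := by
  rw [compliers, sum_filter]
  exact sum_congr rfl fun i _ => sub_eq_ite_of_monotone (y i) (hmono i)

theorem sum_treatment_effect_eq_card_compliers (t : ι → Bool → Bool)
    (hmono : ∀ i, t i false = true → t i true = true) :
    ∑ i, ((if t i true then (1 : ℝ) else 0) - (if t i false then (1 : ℝ) else 0)) =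
      (compliers t).card := by
  simpa using sum_instrument_effect_eq_sum_compliers t hmono fun _ b => if b then (1 : ℝ) else 0

end

open Finset in
theorem stmt5_general {n : ℕ} (t : Fin n → Bool → Bool) (y : Fin n → Bool → ℝ)
    (hmono : ∀ i, t i false = true → t i true = true) :
    (1 / (((Finset.univ : Finset (Fin n)).filter fun i =>
        t i true = true ∧ t i false = false).card : ℝ)) *
      ∑ i ∈ (Finset.univ.filter fun i => t i true = true ∧ t i false = false),
        (y i true - y i false) =
    (∑ i, (y i (t i true) - y i (t i false))) /
      (∑ i, ((if t i true then (1:ℝ) else 0) - (if t i false then (1:ℝ) else 0))) := by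
  rw [sum_instrument_effect_eq_sum_compliers t hmono,
    sum_treatment_effect_eq_card_compliers t hmono, compliers, one_div_mul_eq_div]

open Finset in
/-- The LATE on compliers equals the ratio of the average instrument effect
on outcomes to the average instrument effect on treatment. -/
theorem stmt5 {n : ℕ} (t : Fin n → Bool → Bool) (y : Fin n → Bool → ℝ)
    (hmono : ∀ i, t i false = true → t i true = true)
    (hc : 0 < ((Finset.univ : Finset (Fin n)).filter fun i =>
      t i true = true ∧ t i false = false).card) :
    (1 / (((Finset.univ : Finset (Fin n)).filter fun i =>
        t i true = true ∧ t i false = false).card : ℝ)) *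
      ∑ i ∈ (Finset.univ.filter fun i => t i true = true ∧ t i false = false),
        (y i true - y i false) =
    (∑ i, (y i (t i true) - y i (t i false))) /
      (∑ i, ((if t i true then (1:ℝ) else 0) - (if t i false then (1:ℝ) else 0))) :=
  stmt5_general t y hmono
end

section
/- With the notation of the LATE decomposition, partition the units by their covariate value x ∈ X (finite set), letting n_x = #{i : x_i = x}, ω_x = n_x/n, ITT_{y,x} = (1/n_x) Σ_{i : x_i = x} (y_i(t_i(1)) − y_i(t_i(0))), and ITT_{t,x} = (1/n_x) Σ_{i : x_i = x} (t_i(1) − t_i(0)). If Σ_x ω_x ITT_{t,x} ≠ 0, then λ = (Σ_x ω_x ITT_{y,x}) / (Σ_x ω_x ITT_{t,x}), where λ = (1/n_c) Σ_{i : t_i(1) > t_i(0)} (y_i(1) − y_i(0)) and n_c = #{i : t_i(1) > t_i(0)}. -/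
/-!
The ω-weighted stratum means collapse to the plain mean `(1/n) ∑ᵢ`, and the factor `1/n`
cancels in the ratio. By monotonicity a unit's intention-to-treat effect vanishes unless it is
a complier, where it equals `y(1) − y(0)` for the outcome and `1` for the treatment; so the
ratio is the mean of `y(1) − y(0)` over the compliers.
-/

open Finset

theorem sum_card_div_mul_fiber_mean {ι X K : Type*} [Fintype ι] [Fintype X] [DecidableEq X]
    [Field K] [CharZero K] (x : ι → X) (N : K) (f : ι → K) :
    ∑ v : X, ((univ.filter fun i => x i = v).card / N) *
      ((1 / ((univ.filter fun i => x i = v).card : K)) *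
        ∑ i ∈ univ.filter fun i => x i = v, f i) =
    1 / N * ∑ i, f i := by
  rw [← sum_fiberwise (g := x) (f := f), mul_sum]
  refine sum_congr rfl fun v _ => ?_
  rcases eq_or_ne (univ.filter fun i => x i = v).card 0 with h | h
  · simp [card_eq_zero.mp h]
  · field_simp

theorem Bool.apply_sub_apply_eq_ite {M : Type*} [AddGroup M] {t : Bool → Bool}
    (hmono : t false = true → t true = true) (g : Bool → M) :
    g (t true) - g (t false) =
      if t true = true ∧ t false = false then g true - g false else 0 := by
  cases h₁ : t true <;> cases h₀ : t false <;> simp_all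

theorem sum_apply_sub_apply_eq_sum_compliers {ι M : Type*} [Fintype ι] [AddCommGroup M]
    {t : ι → Bool → Bool} (hmono : ∀ i, t i false = true → t i true = true)
    (g : ι → Bool → M) :
    ∑ i, (g i (t i true) - g i (t i false)) =
      ∑ i ∈ univ.filter fun i => t i true = true ∧ t i false = false, (g i true - g i false) := by
  rw [sum_filter]
  exact sum_congr rfl fun i _ => Bool.apply_sub_apply_eq_ite (hmono i) (g i)

theorem sum_ite_sub_ite_eq_card_compliers {ι : Type*} [Fintype ι]
    {t : ι → Bool → Bool} (hmono : ∀ i, t i false = true → t i true = true) :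
    ∑ i, ((if t i true then (1:ℝ) else 0) - (if t i false then (1:ℝ) else 0)) =
      (univ.filter fun i => t i true = true ∧ t i false = false).card := by
  simpa using sum_apply_sub_apply_eq_sum_compliers hmono fun _ b => if b then (1:ℝ) else 0

open Finset in
theorem stmt6_general {n : ℕ} {X : Type*} [Fintype X] [DecidableEq X]
    (x : Fin n → X) (t : Fin n → Bool → Bool) (y : Fin n → Bool → ℝ)
    (hmono : ∀ i, t i false = true → t i true = true)
    (hden : (∑ v : X, ((Finset.univ.filter fun i => x i = v).card / (n:ℝ)) *
      ((1 / ((Finset.univ.filter fun i => x i = v).card : ℝ)) *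
        ∑ i ∈ Finset.univ.filter fun i => x i = v,
          ((if t i true then (1:ℝ) else 0) - (if t i false then (1:ℝ) else 0)))) ≠ 0) :
    (1 / (((Finset.univ : Finset (Fin n)).filter fun i =>
        t i true = true ∧ t i false = false).card : ℝ)) *
      ∑ i ∈ (Finset.univ.filter fun i => t i true = true ∧ t i false = false),
        (y i true - y i false) =
    (∑ v : X, ((Finset.univ.filter fun i => x i = v).card / (n:ℝ)) *
      ((1 / ((Finset.univ.filter fun i => x i = v).card : ℝ)) *
        ∑ i ∈ Finset.univ.filter fun i => x i = v,
          (y i (t i true) - y i (t i false)))) /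
    (∑ v : X, ((Finset.univ.filter fun i => x i = v).card / (n:ℝ)) *
      ((1 / ((Finset.univ.filter fun i => x i = v).card : ℝ)) *
        ∑ i ∈ Finset.univ.filter fun i => x i = v,
          ((if t i true then (1:ℝ) else 0) - (if t i false then (1:ℝ) else 0)))) := by
  simp only [sum_card_div_mul_fiber_mean, sum_ite_sub_ite_eq_card_compliers hmono,
    sum_apply_sub_apply_eq_sum_compliers hmono y] at hden ⊢
  rw [mul_div_mul_left _ _ (left_ne_zero_of_mul hden), one_div_mul_eq_div]

open Finset in
/-- Covariate-stratified decomposition of the LATE: the LATE equals the ratio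
of ω-weighted stratum ITT effects on outcome and treatment. -/
theorem stmt6 {n : ℕ} {X : Type*} [Fintype X] [DecidableEq X]
    (x : Fin n → X) (t : Fin n → Bool → Bool) (y : Fin n → Bool → ℝ)
    (hmono : ∀ i, t i false = true → t i true = true)
    (hn : 0 < n)
    (hden : (∑ v : X, ((Finset.univ.filter fun i => x i = v).card / (n:ℝ)) *
      ((1 / ((Finset.univ.filter fun i => x i = v).card : ℝ)) *
        ∑ i ∈ Finset.univ.filter fun i => x i = v,
          ((if t i true then (1:ℝ) else 0) - (if t i false then (1:ℝ) else 0)))) ≠ 0) :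
    (1 / (((Finset.univ : Finset (Fin n)).filter fun i =>
        t i true = true ∧ t i false = false).card : ℝ)) *
      ∑ i ∈ (Finset.univ.filter fun i => t i true = true ∧ t i false = false),
        (y i true - y i false) =
    (∑ v : X, ((Finset.univ.filter fun i => x i = v).card / (n:ℝ)) *
      ((1 / ((Finset.univ.filter fun i => x i = v).card : ℝ)) *
        ∑ i ∈ Finset.univ.filter fun i => x i = v,
          (y i (t i true) - y i (t i false)))) /
    (∑ v : X, ((Finset.univ.filter fun i => x i = v).card / (n:ℝ)) *
      ((1 / ((Finset.univ.filter fun i => x i = v).card : ℝ)) *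
        ∑ i ∈ Finset.univ.filter fun i => x i = v,
          ((if t i true then (1:ℝ) else 0) - (if t i false then (1:ℝ) else 0)))) :=
  stmt6_general x t y hmono hden
end
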